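/- Suppose s = ([i_1,j_1],…,[i_r,j_r]) ∈ 𝕀_{n,+}^r. Then s̄[n] = { w·τ_{m_1,ℓ_1}⋯τ_{m_p,ℓ_p} s : w ∈ Σ_r(s), p ≥ 0, 1 ≤ m_t < ℓ_t ≤ r } \ {0}. In particular s̄[n] is a finite set and contains at least one closed element of 𝕀_{n,+}^r (up to permutation). -/

import Mathlib

open scoped Classical

/-- An interval `[i,j]` is encoded as the pair `(i,j)` of integers. -/
abbrev Intv := ℤ × ℤ

/-- Membership in `𝕀ₙ`: `0 ≤ j - i ≤ n + 1`. -/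
def memI (n : ℕ) (a : Intv) : Prop := 0 ≤ a.2 - a.1 ∧ a.2 - a.1 ≤ (n : ℤ) + 1

/-- The pair `([i₁,j₁],[i₂,j₂])` is connected (for the parameter `n`). -/
def Conn (n : ℕ) (a b : Intv) : Prop :=
  (b.1 < a.1 ∧ a.1 ≤ b.2 ∧ b.2 < a.2 ∧ 0 ≤ a.2 - b.1 ∧ a.2 - b.1 ≤ (n : ℤ) + 1) ∨
  (a.1 < b.1 ∧ b.1 ≤ a.2 ∧ a.2 < b.2 ∧ 0 ≤ b.2 - a.1 ∧ b.2 - a.1 ≤ (n : ℤ) + 1)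

/-- The partial map `τ_{m,ℓ}`, with `none` playing the role of `0`. -/
noncomputable def tau (n : ℕ) {r : ℕ} (m l : Fin r) (s : Fin r → Intv) :
    Option (Fin r → Intv) :=
  if Conn n (s m) (s l) then
    some (Function.update (Function.update s m ((s l).1, (s m).2)) l ((s m).1, (s l).2))
  else none

/-- A subset `J ⊆ 𝕀ₙ^r` is closed. -/
def IsClosedSet (n : ℕ) {r : ℕ} (J : Set (Fin r → Intv)) : Prop :=
  ∀ s ∈ J, ∀ m l : Fin r, m < l →
    (∀ s', tau n m l s = some s' → s' ∈ J) ∧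
    ((s m).2 = (s l).2 → (fun u => s (Equiv.swap m l u)) ∈ J)

/-- `s̄[n]`: the smallest closed subset of `𝕀ₙ^r` containing `s`. -/
def sbar (n : ℕ) {r : ℕ} (s : Fin r → Intv) : Set (Fin r → Intv) :=
  ⋂₀ {J | IsClosedSet n J ∧ s ∈ J}

/-- `s` is a closed element: `s̄[n] ⊆ Σ_r · s`. -/
def IsClosedElt (n : ℕ) {r : ℕ} (s : Fin r → Intv) : Prop :=
  ∀ s' ∈ sbar n s, ∃ w : Equiv.Perm (Fin r), s' = fun u => s (w u)

/-- `s ∈ 𝕀_{n,+}^r`: all entries are intervals and the right endpoints are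
weakly decreasing. -/
def Iplus (n : ℕ) {r : ℕ} (s : Fin r → Intv) : Prop :=
  (∀ t, memI n (s t)) ∧ ∀ p : ℕ, (hp : p + 1 < r) → (s ⟨p + 1, hp⟩).2 ≤ (s ⟨p, by omega⟩).2

/-- `Σ_r(s)`: the subgroup of `Σ_r` generated by the simple transpositions `σ_p`
with `j_p = j_{p+1}`. -/
def SigmaS {r : ℕ} (s : Fin r → Intv) : Subgroup (Equiv.Perm (Fin r)) :=
  Subgroup.closure { w | ∃ p : ℕ, ∃ hp : p + 1 < r,
      (s ⟨p, by omega⟩).2 = (s ⟨p + 1, hp⟩).2 ∧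
      w = Equiv.swap ⟨p, by omega⟩ ⟨p + 1, hp⟩ }

section Aux

variable {n r : ℕ}

lemma conn_ne {a b : Intv} (h : Conn n a b) : a ≠ b := by
  rcases h with ⟨h1, _⟩ | ⟨h1, _⟩ <;> intro e <;> rw [e] at h1 <;> exact lt_irrefl _ h1

lemma conn_symm {a b : Intv} : Conn n a b ↔ Conn n b a := by unfold Conn; tauto

lemma update_form {t : Fin r → Intv} {m l : Fin r} (hml : m ≠ l) (u : Fin r) :
    Function.update (Function.update t m ((t l).1, (t m).2)) l ((t m).1, (t l).2) u
      = ((t (Equiv.swap m l u)).1, (t u).2) := by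
  rcases eq_or_ne u l with rfl | hul
  · rw [Function.update_self, Equiv.swap_apply_right]
  · rw [Function.update_of_ne hul]
    rcases eq_or_ne u m with rfl | hum
    · rw [Function.update_self, Equiv.swap_apply_left]
    · rw [Function.update_of_ne hum, Equiv.swap_apply_of_ne_of_ne hum hul]

lemma tau_eq_some {m l : Fin r} {t t' : Fin r → Intv} (h : tau n m l t = some t') :
    Conn n (t m) (t l) ∧ m ≠ l ∧ ∀ u, t' u = ((t (Equiv.swap m l u)).1, (t u).2) := by
  unfold tau at h
  by_cases hc : Conn n (t m) (t l)
  · rw [if_pos hc] at h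
    injection h with h
    have hml : m ≠ l := by rintro rfl; exact conn_ne hc rfl
    subst h
    exact ⟨hc, hml, update_form hml⟩
  · rw [if_neg hc] at h; cases h

lemma tau_eq_some' {m l : Fin r} {t : Fin r → Intv} (hml : m ≠ l)
    (hc : Conn n (t m) (t l)) :
    tau n m l t = some (fun u => ((t (Equiv.swap m l u)).1, (t u).2)) := by
  unfold tau
  rw [if_pos hc]
  congr 1
  funext u
  exact update_form hml u

lemma tau_symm (m l : Fin r) (t : Fin r → Intv) : tau n m l t = tau n l m t := by
  rcases eq_or_ne m l with rfl | hml
  · rfl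
  by_cases hc : Conn n (t m) (t l)
  · rw [tau_eq_some' hml hc, tau_eq_some' hml.symm (conn_symm.mp hc)]
    congr 1; funext u; rw [Equiv.swap_comm]
  · unfold tau
    rw [if_neg hc, if_neg (fun h => hc (conn_symm.mp h))]

lemma tau_comp_perm (w : Equiv.Perm (Fin r)) (m l : Fin r) (t : Fin r → Intv) :
    tau n m l (fun u => t (w u))
      = Option.map (fun v => fun u => v (w u)) (tau n (w m) (w l) t) := by
  rcases eq_or_ne m l with rfl | hml
  · unfold tau
    rw [if_neg (fun h => conn_ne h rfl), if_neg (fun h => conn_ne h rfl)]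
    rfl
  · by_cases hc : Conn n (t (w m)) (t (w l))
    · rw [tau_eq_some' (w.injective.ne hml) hc, tau_eq_some' hml hc]
      simp only [Option.map_some]
      congr 1; funext u
      have : w (Equiv.swap m l u) = Equiv.swap (w m) (w l) (w u) := by
        rcases eq_or_ne u m with rfl | hum
        · simp
        rcases eq_or_ne u l with rfl | hul
        · simp
        · rw [Equiv.swap_apply_of_ne_of_ne hum hul,
            Equiv.swap_apply_of_ne_of_ne (w.injective.ne hum) (w.injective.ne hul)]
      rw [this]
    · unfold tau
      rw [if_neg hc, if_neg hc]
      rfl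

/-- Reachability by a sequence of `τ` moves. -/
def Reach (n : ℕ) {r : ℕ} (s t : Fin r → Intv) : Prop :=
  ∃ L : List (Fin r × Fin r), (∀ q ∈ L, q.1 < q.2) ∧
    L.foldr (fun q o => o.bind (tau n q.1 q.2)) (some s) = some t

lemma reach_refl (s : Fin r → Intv) : Reach n s s := ⟨[], by simp, by simp⟩

lemma reach_step {s t t' : Fin r → Intv} {m l : Fin r} (h : Reach n s t)
    (htau : tau n m l t = some t') (hml : m < l) : Reach n s t' := by
  obtain ⟨L, hL, hf⟩ := h
  refine ⟨(m, l) :: L, ?_, ?_⟩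
  · intro q hq
    rcases List.mem_cons.mp hq with rfl | hq
    · exact hml
    · exact hL q hq
  · rw [List.foldr_cons, hf]
    simpa using htau

lemma reach_rec {s : Fin r → Intv} {P : (Fin r → Intv) → Prop} (hP : P s)
    (step : ∀ t t' (m l : Fin r), m < l → P t → tau n m l t = some t' → P t') :
    ∀ t, Reach n s t → P t := by
  have main : ∀ L : List (Fin r × Fin r), (∀ q ∈ L, q.1 < q.2) → ∀ t,
      L.foldr (fun q o => o.bind (tau n q.1 q.2)) (some s) = some t → P t := by
    intro L
    induction L with
    | nil =>
        intro _ t h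
        simp only [List.foldr_nil, Option.some.injEq] at h
        exact h ▸ hP
    | cons a L ih =>
        intro hL t h
        rw [List.foldr_cons] at h
        obtain ⟨t₁, h1, h2⟩ := Option.bind_eq_some_iff.mp h
        exact step t₁ t a.1 a.2 (hL a List.mem_cons_self)
          (ih (fun q hq => hL q (List.mem_cons_of_mem a hq)) t₁ h1) h2
  rintro t ⟨L, hL, hf⟩
  exact main L hL t hf

lemma reach_snd {s t : Fin r → Intv} (h : Reach n s t) : ∀ p, (t p).2 = (s p).2 := by
  refine reach_rec (P := fun t => ∀ p, (t p).2 = (s p).2) (fun p => rfl) ?_ t h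
  rintro t t' m l hml hP htau p
  obtain ⟨-, -, ht'⟩ := tau_eq_some htau
  rw [ht' p]
  exact hP p

lemma reach_memI {s : Fin r → Intv} (hsI : ∀ p, memI n (s p)) {t : Fin r → Intv}
    (h : Reach n s t) : ∀ p, memI n (t p) := by
  refine reach_rec (P := fun t => ∀ p, memI n (t p)) hsI ?_ t h
  rintro t t' m l hml hP htau p
  obtain ⟨hc, hne, ht'⟩ := tau_eq_some htau
  rw [ht' p]
  have hm := hP m; have hl := hP l; have hp := hP p
  rcases eq_or_ne p m with rfl | h1
  · rw [Equiv.swap_apply_left]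
    simp only [memI, Conn] at *
    rcases hc with h | h <;> constructor <;> omega
  rcases eq_or_ne p l with rfl | h2
  · rw [Equiv.swap_apply_right]
    simp only [memI, Conn] at *
    rcases hc with h | h <;> constructor <;> omega
  · rw [Equiv.swap_apply_of_ne_of_ne h1 h2]
    exact hp

lemma reach_alpha {s t : Fin r → Intv} (h : Reach n s t) :
    ∃ α : Equiv.Perm (Fin r), ∀ u, t u = ((s (α u)).1, (s u).2) := by
  refine reach_rec (P := fun t => ∃ α : Equiv.Perm (Fin r), ∀ u, t u = ((s (α u)).1, (s u).2)) ⟨1, fun u => by simp⟩ ?_ t h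
  rintro t t' m l hml ⟨α, hα⟩ htau
  obtain ⟨hc, hne, ht'⟩ := tau_eq_some htau
  refine ⟨α * Equiv.swap m l, fun u => ?_⟩
  rw [ht' u]
  simp [hα, Equiv.Perm.mul_apply]

end Aux

section Aux2

variable {n r : ℕ}

lemma gen_snd {s : Fin r → Intv} {p : ℕ} (hp : p + 1 < r)
    (hj : (s ⟨p, by omega⟩).2 = (s ⟨p + 1, hp⟩).2) (q : Fin r) :
    (s (Equiv.swap ⟨p, by omega⟩ ⟨p + 1, hp⟩ q)).2 = (s q).2 := by
  rcases eq_or_ne q ⟨p, by omega⟩ with rfl | h1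
  · rw [Equiv.swap_apply_left]; exact hj.symm
  rcases eq_or_ne q ⟨p + 1, hp⟩ with rfl | h2
  · rw [Equiv.swap_apply_right]; exact hj
  · rw [Equiv.swap_apply_of_ne_of_ne h1 h2]

lemma sigmaS_apply_snd {s : Fin r → Intv} {w : Equiv.Perm (Fin r)} (hw : w ∈ SigmaS s) :
    ∀ q, (s (w q)).2 = (s q).2 := by
  refine Subgroup.closure_induction
    (p := fun x _ => ∀ q, (s (x q)).2 = (s q).2) ?_ ?_ ?_ ?_ hw
  · rintro x ⟨p, hp, hj, rfl⟩ q
    exact gen_snd hp hj q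
  · intro q; rfl
  · intro x y hx hy ihx ihy q
    rw [Equiv.Perm.mul_apply, ihx, ihy]
  · intro x hx ih q
    have h := ih (x⁻¹ q)
    rw [← Equiv.Perm.mul_apply, mul_inv_cancel, Equiv.Perm.one_apply] at h
    exact h.symm

lemma iplus_antitone {s : Fin r → Intv} (hs : Iplus n s) :
    ∀ a b : Fin r, a ≤ b → (s b).2 ≤ (s a).2 := by
  have key : ∀ d (a : Fin r) (h : a.val + d < r), (s ⟨a.val + d, h⟩).2 ≤ (s a).2 := by
    intro d
    induction d with
    | zero =>
        intro a h
        have : (⟨a.val + 0, h⟩ : Fin r) = a := Fin.ext (Nat.add_zero _)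
        rw [this]
    | succ d ih =>
        intro a h
        have h2 : a.val + d < r := by omega
        exact le_trans (hs.2 (a.val + d) h) (ih a h2)
  intro a b hab
  have hb : b = ⟨a.val + (b.val - a.val), by omega⟩ := Fin.ext (by simp; omega)
  rw [hb]
  exact key _ a _

lemma swap_mem_sigmaS {s : Fin r → Intv} (hs : Iplus n s) {a b : Fin r}
    (hj : (s a).2 = (s b).2) : Equiv.swap a b ∈ SigmaS s := by
  have key : ∀ d (a b : Fin r), b.val = a.val + d → (s a).2 = (s b).2 →
      Equiv.swap a b ∈ SigmaS s := by
    intro d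
    induction d with
    | zero =>
        intro a b hab _
        have : a = b := Fin.ext (by omega)
        rw [this, Equiv.swap_self, ← Equiv.Perm.one_def]
        exact one_mem _
    | succ d ih =>
        intro a b hab hj
        have hpb : a.val + d + 1 < r := by omega
        set b' : Fin r := ⟨a.val + d, by omega⟩ with hb'
        have hb : b = ⟨a.val + d + 1, hpb⟩ := Fin.ext (show b.val = a.val + d + 1 by omega)
        have hj1 : (s b').2 = (s b).2 := by
          have h1 := iplus_antitone hs a b' (by rw [Fin.le_def]; exact Nat.le_add_right _ _)
          have h2 := iplus_antitone hs b' b (by rw [Fin.le_def]; show a.val + d ≤ b.val; omega)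
          omega
        have hgen : Equiv.swap b' b ∈ SigmaS s := by
          apply Subgroup.subset_closure
          exact ⟨a.val + d, hpb, by rw [← hb]; exact hj1, by rw [← hb]⟩
        rcases Nat.eq_zero_or_pos d with rfl | hd
        · have : a = b' := Fin.ext (by simp [hb'])
          rw [this]
          exact hgen
        · have hab' : a ≠ b' := by
            intro e
            have := congrArg Fin.val e
            simp [hb'] at this
            omega
          have habne : a ≠ b := by
            intro e
            have := congrArg Fin.val e
            omega
          have ihm := ih a b' rfl (hj.trans hj1.symm)
          have hsw : Equiv.swap b' b * Equiv.swap a b' * Equiv.swap b' b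
              = Equiv.swap b a := Equiv.swap_mul_swap_mul_swap hab' habne
          rw [Equiv.swap_comm, ← hsw]
          exact mul_mem (mul_mem hgen ihm) hgen
  rcases le_total a b with hab | hab
  · exact key (b.val - a.val) a b (by omega) hj
  · rw [Equiv.swap_comm]
    exact key (a.val - b.val) b a (by omega) hj.symm

lemma mem_sbar_self (n : ℕ) (s : Fin r → Intv) : s ∈ sbar n s :=
  fun _ hJ => hJ.2

lemma sbar_subset {s : Fin r → Intv} {J : Set (Fin r → Intv)} (hJ : IsClosedSet n J)
    (hsJ : s ∈ J) : sbar n s ⊆ J :=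
  Set.sInter_subset_of_mem ⟨hJ, hsJ⟩

lemma sbar_closed (n : ℕ) (s : Fin r → Intv) : IsClosedSet n (sbar n s) := by
  intro t ht m l hml
  refine ⟨fun t' htau => ?_, fun hj => ?_⟩
  · exact fun J hJ => (hJ.1 t (ht J hJ) m l hml).1 t' htau
  · exact fun J hJ => (hJ.1 t (ht J hJ) m l hml).2 hj

lemma perm_mem_closed {J : Set (Fin r → Intv)} (hJ : IsClosedSet n J) {s : Fin r → Intv}
    {w : Equiv.Perm (Fin r)} (hw : w ∈ SigmaS s) :
    ∀ t' ∈ J, (∀ p, (t' p).2 = (s p).2) → (fun u => t' (w u)) ∈ J := by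
  set Gen := { w : Equiv.Perm (Fin r) | ∃ p : ℕ, ∃ hp : p + 1 < r,
      (s ⟨p, by omega⟩).2 = (s ⟨p + 1, hp⟩).2 ∧
      w = Equiv.swap ⟨p, by omega⟩ ⟨p + 1, hp⟩ } with hGen
  have hw' : w ∈ Submonoid.closure (Gen ∪ Gen⁻¹) := by
    rw [← Subgroup.closure_toSubmonoid]
    exact hw
  obtain ⟨lst, hlst, hprod⟩ := Submonoid.exists_list_of_mem_closure hw'
  have hlst' : ∀ x ∈ lst, x ∈ Gen := by
    intro x hx
    rcases hlst x hx with h | h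
    · exact h
    · obtain ⟨p, hp, hj, he⟩ := Set.mem_inv.mp h
      exact ⟨p, hp, hj, by rw [← inv_inv x, he, Equiv.swap_inv]⟩
  subst hprod
  clear hlst hw hw'
  induction lst with
  | nil =>
      intro t' ht htj
      simpa using ht
  | cons g lst ih =>
      intro t' ht htj
      obtain ⟨p, hp, hj, rfl⟩ := hlst' g List.mem_cons_self
      have hlt : (⟨p, by omega⟩ : Fin r) < ⟨p + 1, hp⟩ := by
        rw [Fin.lt_def]; exact Nat.lt_succ_self p
      have step := (hJ t' ht ⟨p, by omega⟩ ⟨p + 1, hp⟩ hlt).2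
        (by rw [htj, htj]; exact hj)
      have htj' : ∀ q, ((fun u => t' (Equiv.swap ⟨p, by omega⟩ ⟨p + 1, hp⟩ u)) q).2
          = (s q).2 := by
        intro q
        show (t' (Equiv.swap ⟨p, by omega⟩ ⟨p + 1, hp⟩ q)).2 = (s q).2
        rw [htj]
        exact gen_snd hp hj q
      have hmem := ih (fun x hx => hlst' x (List.mem_cons_of_mem _ hx)) _ step htj'
      have : (fun u => (fun x => t' (Equiv.swap ⟨p, by omega⟩ ⟨p + 1, hp⟩ x)) (lst.prod u))
          = fun u => t' ((Equiv.swap ⟨p, by omega⟩ ⟨p + 1, hp⟩ :: lst).prod u) := by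
        funext u
        rw [List.prod_cons, Equiv.Perm.mul_apply]
      rwa [this] at hmem

end Aux2

section Aux3

variable {n r : ℕ}

/-- The set appearing in the main statement, in terms of `Reach`. -/
def TSet (n : ℕ) {r : ℕ} (s : Fin r → Intv) : Set (Fin r → Intv) :=
  { t | ∃ w ∈ SigmaS s, ∃ t', Reach n s t' ∧ t = fun u => t' (w u) }

lemma tset_closed {s : Fin r → Intv} (hs : Iplus n s) : IsClosedSet n (TSet n s) := by
  rintro t ⟨w, hw, t', hre, rfl⟩ m l hml
  constructor
  · intro u htau
    rw [tau_comp_perm] at htau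
    obtain ⟨v, hv, rfl⟩ := Option.map_eq_some_iff.mp htau
    refine ⟨w, hw, v, ?_, rfl⟩
    have hwml : w m ≠ w l := w.injective.ne hml.ne
    rcases lt_or_gt_of_ne hwml with h | h
    · exact reach_step hre hv h
    · rw [tau_symm] at hv
      exact reach_step hre hv h
  · intro hj
    have hj2 : (t' (w m)).2 = (t' (w l)).2 := hj
    have hj' : (s m).2 = (s l).2 := by
      have h1 := reach_snd hre (w m)
      have h2 := reach_snd hre (w l)
      have h3 := sigmaS_apply_snd hw m
      have h4 := sigmaS_apply_snd hw l
      omega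
    refine ⟨w * Equiv.swap m l, mul_mem hw (swap_mem_sigmaS hs hj'), t', hre, ?_⟩
    funext u
    simp [Equiv.Perm.mul_apply]

lemma self_mem_tset (s : Fin r → Intv) : s ∈ TSet n s :=
  ⟨1, one_mem _, s, reach_refl s, by funext u; simp⟩

lemma key {s : Fin r → Intv} (hs : Iplus n s) : sbar n s = TSet n s := by
  apply subset_antisymm
  · exact sbar_subset (tset_closed hs) (self_mem_tset s)
  · rintro t ⟨w, hw, t', hre, rfl⟩
    intro J hJ
    exact perm_mem_closed hJ.1 hw t'
      (reach_rec (P := fun u => u ∈ J) hJ.2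
        (fun t t'' m l hml hP htau => (hJ.1 t hP m l hml).1 t'' htau) t' hre)
      (reach_snd hre)

lemma tau_lt_M {t t' : Fin r → Intv} {m l : Fin r} (h : tau n m l t = some t') :
    ∑ p : Fin r, ((t p).2 - (t p).1) ^ 2 < ∑ p : Fin r, ((t' p).2 - (t' p).1) ^ 2 := by
  obtain ⟨hc, hml, ht'⟩ := tau_eq_some h
  have hm : t' m = ((t l).1, (t m).2) := by rw [ht' m, Equiv.swap_apply_left]
  have hl : t' l = ((t m).1, (t l).2) := by rw [ht' l, Equiv.swap_apply_right]
  have hoff : ∀ p, p ≠ m → p ≠ l → t' p = t p := fun p h1 h2 => by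
    rw [ht' p, Equiv.swap_apply_of_ne_of_ne h1 h2]
  have hsum : (∑ p : Fin r, ((t' p).2 - (t' p).1) ^ 2)
        - ∑ p : Fin r, ((t p).2 - (t p).1) ^ 2
      = ∑ p ∈ ({m, l} : Finset (Fin r)),
          (((t' p).2 - (t' p).1) ^ 2 - ((t p).2 - (t p).1) ^ 2) := by
    rw [← Finset.sum_sub_distrib]
    refine (Finset.sum_subset (Finset.subset_univ _) (fun p _ hp => ?_)).symm
    have h1 : p ≠ m := fun h => hp (by simp [h])
    have h2 : p ≠ l := fun h => hp (by simp [h])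
    rw [hoff p h1 h2]
    ring
  rw [Finset.sum_pair hml, hm, hl] at hsum
  simp only [] at hsum
  rcases hc with ⟨h1, h2, h3, h4, h5⟩ | ⟨h1, h2, h3, h4, h5⟩
  · nlinarith [hsum, mul_pos (sub_pos.2 h1) (sub_pos.2 h3)]
  · nlinarith [hsum, mul_pos (sub_pos.2 h1) (sub_pos.2 h3)]

end Aux3

section Main

variable {n r : ℕ}

lemma mem_sbar_snd {s t : Fin r → Intv} (hs : Iplus n s) (ht : t ∈ sbar n s) :
    ∀ p, (t p).2 = (s p).2 := by
  rw [key hs] at ht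
  obtain ⟨w, hw, t', hre, rfl⟩ := ht
  intro p
  show (t' (w p)).2 = (s p).2
  have h1 : (t' (w p)).2 = (s (w p)).2 := reach_snd hre (w p)
  have h2 := sigmaS_apply_snd hw p
  omega

lemma mem_sbar_iplus {s t : Fin r → Intv} (hs : Iplus n s) (ht : t ∈ sbar n s) :
    Iplus n t := by
  constructor
  · rw [key hs] at ht
    obtain ⟨w, hw, t', hre, rfl⟩ := ht
    exact fun q => reach_memI hs.1 hre (w q)
  · intro p hp
    rw [mem_sbar_snd hs ht, mem_sbar_snd hs ht]
    exact hs.2 p hp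

/-- for `s ∈ 𝕀_{n,+}^r`, the closure `s̄[n]` is exactly the set of nonzero
elements of the form `w · τ_{m₁,ℓ₁} ⋯ τ_{m_p,ℓ_p} s` with `w ∈ Σ_r(s)`; in particular
`s̄[n]` is finite and contains a closed element. -/
theorem stmt_4 (n r : ℕ) (s : Fin r → Intv) (hs : Iplus n s) :
    sbar n s =
      { t | ∃ w ∈ SigmaS s, ∃ L : List (Fin r × Fin r), (∀ q ∈ L, q.1 < q.2) ∧
          ∃ t', L.foldr (fun q o => o.bind (tau n q.1 q.2)) (some s) = some t' ∧
            t = fun u => t' (w u) } ∧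
    (sbar n s).Finite ∧ ∃ s₀ ∈ sbar n s, IsClosedElt n s₀ := by
  have heq : sbar n s =
      { t | ∃ w ∈ SigmaS s, ∃ L : List (Fin r × Fin r), (∀ q ∈ L, q.1 < q.2) ∧
          ∃ t', L.foldr (fun q o => o.bind (tau n q.1 q.2)) (some s) = some t' ∧
            t = fun u => t' (w u) } := by
    rw [key hs]
    ext t
    constructor
    · rintro ⟨w, hw, t', ⟨L, hL, hf⟩, rfl⟩
      exact ⟨w, hw, L, hL, t', hf, rfl⟩
    · rintro ⟨w, hw, L, hL, t', hf, rfl⟩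
      exact ⟨w, hw, t', ⟨L, hL, hf⟩, rfl⟩
  have hfin : (sbar n s).Finite := by
    rw [key hs]
    apply Set.Finite.subset (Set.finite_range
      (fun p : Equiv.Perm (Fin r) × Equiv.Perm (Fin r) =>
        fun u => (((s (p.1 u)).1, (s (p.2 u)).2) : Intv)))
    rintro t ⟨w, hw, t', hre, rfl⟩
    obtain ⟨α, hα⟩ := reach_alpha hre
    refine ⟨(α * w, w), ?_⟩
    funext u
    rw [hα (w u)]
    simp [Equiv.Perm.mul_apply]
  refine ⟨heq, hfin, ?_⟩
  -- choose an element maximizing the spread measure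
  have hne : hfin.toFinset.Nonempty :=
    ⟨s, by rw [Set.Finite.mem_toFinset]; exact mem_sbar_self n s⟩
  obtain ⟨t₀, ht₀mem', ht₀max⟩ := hfin.toFinset.exists_max_image
    (fun t => ∑ p : Fin r, ((t p).2 - (t p).1) ^ 2) hne
  rw [Set.Finite.mem_toFinset] at ht₀mem'
  have htn : ∀ m l : Fin r, tau n m l t₀ = none := by
    intro m l
    by_contra h
    obtain ⟨t₁, ht₁⟩ := Option.ne_none_iff_exists'.mp h
    have hmem : t₁ ∈ sbar n s := by
      obtain ⟨-, hml, -⟩ := tau_eq_some ht₁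
      rcases lt_or_gt_of_ne hml with hlt | hgt
      · exact ((sbar_closed n s) t₀ ht₀mem' m l hlt).1 t₁ ht₁
      · rw [tau_symm] at ht₁
        exact ((sbar_closed n s) t₀ ht₀mem' l m hgt).1 t₁ ht₁
    have h1 := tau_lt_M ht₁
    have h2 := ht₀max t₁ (by rw [Set.Finite.mem_toFinset]; exact hmem)
    omega
  refine ⟨t₀, ht₀mem', ?_⟩
  intro t' ht'
  rw [key (mem_sbar_iplus hs ht₀mem')] at ht'
  obtain ⟨w, hw, v, hre, rfl⟩ := ht'
  have hv : v = t₀ :=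
    reach_rec (P := fun u => u = t₀) rfl
      (fun t t'' m l hml hP htau => by rw [hP, htn m l] at htau; cases htau) v hre
  exact ⟨w, by rw [hv]⟩

end Main
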